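/- Let ℜ ⊆ F(𝒜) and let P(ℜ) ⊆ S be the ideal generated by the elements of ℜ (viewed as linear polynomials). Then for every f ∈ S: f ∈ P(ℜ) if and only if ι(f) ∈ √(J(ℜ)) : x_[n]. -/

import Mathlib

open MvPolynomial

noncomputable section

variable {K : Type*} [Field K] {n : ℕ}

/-- `Λ(f)`: the least common multiple of the monomials of `f` (so `Λ(0) = 1`). -/
def lamP (f : MvPolynomial (Fin n) K) : MvPolynomial (Fin n) K :=
  ∏ i, X i ^ (f.support.sup fun m => m i)

/-- `ι(f)`: the unique polynomial with `f(x₁⁻¹,…,xₙ⁻¹) = ι(f)/Λ(f)` in `K(x₁,…,xₙ)`. -/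
def iotaP (f : MvPolynomial (Fin n) K) : MvPolynomial (Fin n) K :=
  ∑ m ∈ f.support, C (f.coeff m) * ∏ i, X i ^ ((f.support.sup fun m' => m' i) - m i)

/-- The evaluation `f(x₁⁻¹,…,xₙ⁻¹)` of `f` at `(x₁⁻¹,…,xₙ⁻¹)`, an element of the fraction
field `K(x₁,…,xₙ)`. -/
def invEval (f : MvPolynomial (Fin n) K) : FractionRing (MvPolynomial (Fin n) K) :=
  eval₂ ((algebraMap (MvPolynomial (Fin n) K) (FractionRing (MvPolynomial (Fin n) K))).comp C)
    (fun i => (algebraMap (MvPolynomial (Fin n) K) (FractionRing (MvPolynomial (Fin n) K)) (X i))⁻¹) f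

variable {K : Type*} [Field K] {n : ℕ}

/-- The linear form `∑ᵢ aᵢ xᵢ ∈ S₁` associated to a coefficient vector `a : Fin n → K`. -/
def toLin (a : Fin n → K) : MvPolynomial (Fin n) K := ∑ i, C (a i) * X i

/-- `a` is a relation of the central arrangement whose hyperplanes are the kernels of the
linear forms `α i`. -/
def IsRel {V : Type*} [AddCommGroup V] [Module K V]
    (α : Fin n → Module.Dual K V) (a : Fin n → K) : Prop :=
  ∑ i, a i • α i = 0

/-!
Reflecting exponents, `x^m ↦ x^(d - m)` for a bound `d` on all exponents, turns `f` into
a monomial multiple of `ι(f)`, and it is multiplicative and involutive on bounded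
polynomials. Hence reflection carries `P(ℜ)` into `J(ℜ)` and back, up to monomial factors:
`f ∈ P(ℜ)` gives `x^D ι(f) ∈ J(ℜ)`, and `(ι(f) x_[n])^k ∈ J(ℜ)` gives `x^D f^k ∈ P(ℜ)`.
An ideal generated by linear forms is the kernel of a linear substitution, hence prime, and
`P(ℜ)` contains no variable `xᵢ`, because `eᵢ` is not a relation when `αᵢ ≠ 0`; so the
monomial factors cancel.
-/

namespace MvPolynomial

variable {σ R : Type*} [CommSemiring R]

/-- On polynomials with all exponents `≤ d` this is `f ↦ x^d f(x⁻¹)`; larger exponents are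
truncated by `d - m`. -/
def reflect (d : σ →₀ ℕ) : MvPolynomial σ R →ₗ[R] MvPolynomial σ R :=
  AddMonoidAlgebra.mapDomainLinearMap R R (d - ·)

@[simp]
theorem reflect_monomial (d m : σ →₀ ℕ) (c : R) :
    reflect d (monomial m c) = monomial (d - m) c :=
  AddMonoidAlgebra.mapDomainLinearMap_single _ _ _

theorem reflect_eq_sum (d : σ →₀ ℕ) (f : MvPolynomial σ R) :
    reflect d f = ∑ m ∈ f.support, monomial (d - m) (coeff m f) := by
  conv_lhs => rw [f.as_sum]
  simp only [map_sum, reflect_monomial]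

theorem le_of_mem_support_reflect {d m : σ →₀ ℕ} {f : MvPolynomial σ R}
    (hm : m ∈ (reflect d f).support) : m ≤ d := by
  classical
  by_contra h
  refine mem_support_iff.mp hm ?_
  rw [reflect_eq_sum, coeff_sum]
  refine Finset.sum_eq_zero fun m' _ => ?_
  rw [coeff_monomial, if_neg]
  rintro rfl
  exact h tsub_le_self

theorem le_of_mem_support_one {m e : σ →₀ ℕ} (hm : m ∈ (1 : MvPolynomial σ R).support) :
    m ≤ e := by
  rw [one_def] at hm
  exact (Finset.mem_singleton.mp (support_monomial_subset hm)).trans_le zero_le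

theorem le_add_of_mem_support_mul {d e m : σ →₀ ℕ} {f g : MvPolynomial σ R}
    (hf : ∀ m ∈ f.support, m ≤ d) (hg : ∀ m ∈ g.support, m ≤ e)
    (hm : m ∈ (f * g).support) : m ≤ d + e := by
  classical
  obtain ⟨a, ha, b, hb, rfl⟩ := Finset.mem_add.mp (support_mul f g hm)
  exact add_le_add (hf a ha) (hg b hb)

theorem le_nsmul_of_mem_support_pow {d : σ →₀ ℕ} {f : MvPolynomial σ R}
    (hf : ∀ m ∈ f.support, m ≤ d) (k : ℕ) : ∀ m ∈ (f ^ k).support, m ≤ k • d := by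
  induction k with
  | zero => exact fun m hm => le_of_mem_support_one (pow_zero f ▸ hm)
  | succ k ih =>
    intro m hm
    rw [pow_succ] at hm
    rw [succ_nsmul]
    exact le_add_of_mem_support_mul ih hf hm

theorem reflect_mul {d e : σ →₀ ℕ} {f g : MvPolynomial σ R}
    (hf : ∀ m ∈ f.support, m ≤ d) (hg : ∀ m ∈ g.support, m ≤ e) :
    reflect (d + e) (f * g) = reflect d f * reflect e g := by
  conv_lhs => rw [f.as_sum, g.as_sum, Finset.sum_mul_sum]
  rw [reflect_eq_sum d f, reflect_eq_sum e g, Finset.sum_mul_sum, map_sum]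
  refine Finset.sum_congr rfl fun a ha => ?_
  rw [map_sum]
  refine Finset.sum_congr rfl fun b hb => ?_
  rw [monomial_mul, monomial_mul, reflect_monomial, tsub_add_tsub_comm (hf a ha) (hg b hb)]

theorem reflect_add_eq_monomial_mul {d e : σ →₀ ℕ} {f : MvPolynomial σ R}
    (hf : ∀ m ∈ f.support, m ≤ d) :
    reflect (e + d) f = monomial e 1 * reflect d f := by
  rw [← one_mul f, reflect_mul (fun _ => le_of_mem_support_one) hf, one_mul, one_def,
    reflect_monomial, tsub_zero]

theorem reflect_pow {d : σ →₀ ℕ} {f : MvPolynomial σ R}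
    (hf : ∀ m ∈ f.support, m ≤ d) (k : ℕ) :
    reflect (k • d) (f ^ k) = reflect d f ^ k := by
  induction k with
  | zero => rw [pow_zero, pow_zero, zero_smul, one_def, reflect_monomial, tsub_zero]
  | succ k ih =>
    rw [pow_succ, succ_nsmul, reflect_mul (le_nsmul_of_mem_support_pow hf k) hf, ih, pow_succ]

theorem reflect_reflect {d : σ →₀ ℕ} {f : MvPolynomial σ R}
    (hf : ∀ m ∈ f.support, m ≤ d) : reflect d (reflect d f) = f := by
  conv_rhs => rw [f.as_sum]
  rw [reflect_eq_sum d f, map_sum]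
  refine Finset.sum_congr rfl fun m hm => ?_
  rw [reflect_monomial, tsub_tsub_cancel_of_le (hf m hm)]

theorem reflect_mem_of_le {I : Ideal (MvPolynomial σ R)} {d e : σ →₀ ℕ}
    {g : MvPolynomial σ R} (hg : ∀ m ∈ g.support, m ≤ e) (hI : reflect e g ∈ I) (hed : e ≤ d) :
    reflect d g ∈ I := by
  rw [← tsub_add_cancel_of_le hed, reflect_add_eq_monomial_mul hg]
  exact I.mul_mem_left _ hI

theorem exists_forall_reflect_mem_span {G H : Set (MvPolynomial σ R)}
    (hGH : ∀ g ∈ G, ∃ e, (∀ m ∈ g.support, m ≤ e) ∧ reflect e g ∈ Ideal.span H)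
    {f : MvPolynomial σ R} (hf : f ∈ Ideal.span G) :
    ∃ D, ∀ d, D ≤ d → reflect d f ∈ Ideal.span H := by
  induction hf using Submodule.span_induction with
  | mem g hg =>
    obtain ⟨e, he, hmem⟩ := hGH g hg
    exact ⟨e, fun d => reflect_mem_of_le he hmem⟩
  | zero => exact ⟨0, fun d _ => by rw [map_zero]; exact zero_mem _⟩
  | add x y _ _ hx hy =>
    obtain ⟨D₁, h₁⟩ := hx
    obtain ⟨D₂, h₂⟩ := hy
    refine ⟨D₁ ⊔ D₂, fun d hd => ?_⟩
    rw [map_add]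
    exact add_mem (h₁ d (le_sup_left.trans hd)) (h₂ d (le_sup_right.trans hd))
  | smul a x _ hx =>
    obtain ⟨D, hD⟩ := hx
    set b := D ⊔ x.support.sup id
    refine ⟨a.support.sup id + b, fun d hd => ?_⟩
    have ha : ∀ m ∈ a.support, m ≤ d - b := fun m hm =>
      (Finset.le_sup (f := id) hm).trans (le_tsub_of_add_le_right hd)
    have hx : ∀ m ∈ x.support, m ≤ b := fun m hm =>
      (Finset.le_sup (f := id) hm).trans le_sup_right
    rw [smul_eq_mul, ← tsub_add_cancel_of_le (le_add_self.trans hd), reflect_mul ha hx]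
    exact Ideal.mul_mem_left _ _ (hD b le_sup_left)

section Fintype

variable [Fintype σ]

theorem monomial_eq_C_mul_prod_X_pow (e : σ →₀ ℕ) (c : R) :
    monomial e c = C c * ∏ i, X i ^ e i := by
  rw [monomial_eq, Finsupp.prod_fintype _ _ fun _ => pow_zero _]

theorem prod_X_eq_monomial :
    ∏ i, (X i : MvPolynomial σ R) = monomial (Finsupp.equivFunOnFinite.symm 1) 1 := by
  simp [monomial_eq_C_mul_prod_X_pow]

theorem le_of_mem_support_prod_X {m : σ →₀ ℕ}
    (hm : m ∈ (∏ i, X i : MvPolynomial σ R).support) :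
    m ≤ Finsupp.equivFunOnFinite.symm 1 := by
  rw [prod_X_eq_monomial] at hm
  exact (Finset.mem_singleton.mp (support_monomial_subset hm)).le

theorem monomial_dvd_prod_X_pow (D : σ →₀ ℕ) :
    monomial D (1 : R) ∣ (∏ i, X i) ^ ∑ i, D i := by
  rw [prod_X_eq_monomial, monomial_pow, one_pow]
  refine monomial_dvd_monomial.2 ⟨Or.inr fun j => ?_, one_dvd _⟩
  simpa using Finset.single_le_sum (fun i _ => Nat.zero_le (D i)) (Finset.mem_univ j)

end Fintype

end MvPolynomial

theorem Ideal.mul_mem_radical_of_pow_mul_mem {R : Type*} [CommSemiring R] {I : Ideal R}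
    {x y : R} (N : ℕ) (h : y ^ N * x ∈ I) : x * y ∈ I.radical :=
  ⟨N + 1, by convert I.mul_mem_left (x ^ N * y) h using 1; ring⟩

section Iota

variable {K : Type*} [Field K] {n : ℕ}

theorem iotaP_eq_reflect (f : MvPolynomial (Fin n) K) :
    iotaP f = reflect (f.support.sup id) f := by
  rw [iotaP, reflect_eq_sum]
  refine Finset.sum_congr rfl fun m _ => ?_
  rw [monomial_eq_C_mul_prod_X_pow]
  refine congrArg _ (Finset.prod_congr rfl fun i _ => ?_)
  rw [Finsupp.tsub_apply,
    Finset.apply_sup_eq_sup_comp (fun m : Fin n →₀ ℕ => m i) (fun _ _ => rfl) rfl]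
  rfl

theorem le_of_mem_support_iotaP {f : MvPolynomial (Fin n) K} :
    ∀ m ∈ (iotaP f).support, m ≤ f.support.sup id :=
  fun _ hm => le_of_mem_support_reflect (iotaP_eq_reflect f ▸ hm)

theorem reflect_iotaP (f : MvPolynomial (Fin n) K) :
    reflect (f.support.sup id) (iotaP f) = f := by
  rw [iotaP_eq_reflect, reflect_reflect fun _ => Finset.le_sup (f := id)]

theorem le_of_mem_support_iotaP_mul_prod_X {f : MvPolynomial (Fin n) K} :
    ∀ m ∈ (iotaP f * ∏ i, X i).support,
      m ≤ f.support.sup id + Finsupp.equivFunOnFinite.symm 1 :=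
  fun _ => le_add_of_mem_support_mul le_of_mem_support_iotaP fun _ => le_of_mem_support_prod_X

theorem reflect_iotaP_mul_prod_X (f : MvPolynomial (Fin n) K) :
    reflect (f.support.sup id + Finsupp.equivFunOnFinite.symm 1) (iotaP f * ∏ i, X i) = f := by
  rw [reflect_mul le_of_mem_support_iotaP fun _ => le_of_mem_support_prod_X, reflect_iotaP,
    prod_X_eq_monomial, reflect_monomial, tsub_self, ← one_def, mul_one]

theorem exists_monomial_mul_iotaP_mem_span {G : Set (MvPolynomial (Fin n) K)}
    {f : MvPolynomial (Fin n) K} (hf : f ∈ Ideal.span G) :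
    ∃ D, monomial D 1 * iotaP f ∈ Ideal.span (iotaP '' G) := by
  obtain ⟨D, hD⟩ := exists_forall_reflect_mem_span (H := iotaP '' G) (fun g hg =>
    ⟨_, fun _ => Finset.le_sup (f := id),
      iotaP_eq_reflect g ▸ Ideal.subset_span ⟨g, hg, rfl⟩⟩) hf
  refine ⟨D, ?_⟩
  rw [iotaP_eq_reflect, ← reflect_add_eq_monomial_mul fun _ => Finset.le_sup (f := id)]
  exact hD _ le_self_add

theorem exists_monomial_mul_pow_mem_span {G : Set (MvPolynomial (Fin n) K)}
    {f : MvPolynomial (Fin n) K} {k : ℕ}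
    (hk : (iotaP f * ∏ i, X i) ^ k ∈ Ideal.span (iotaP '' G)) :
    ∃ D, monomial D 1 * f ^ k ∈ Ideal.span G := by
  obtain ⟨D, hD⟩ := exists_forall_reflect_mem_span (H := G) (by
    rintro _ ⟨g, hg, rfl⟩
    exact ⟨_, le_of_mem_support_iotaP, (reflect_iotaP g).symm ▸ Ideal.subset_span hg⟩) hk
  refine ⟨D, ?_⟩
  have hbound := le_of_mem_support_iotaP_mul_prod_X (f := f)
  rw [← reflect_iotaP_mul_prod_X f, ← reflect_pow hbound,
    ← reflect_add_eq_monomial_mul (le_nsmul_of_mem_support_pow hbound k)]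
  exact hD _ le_self_add

end Iota

section LinearForms

variable {K : Type*} [Field K] {n : ℕ}

theorem toLin_eq_linearCombination :
    (toLin : (Fin n → K) → MvPolynomial (Fin n) K) =
      Fintype.linearCombination K (X : Fin n → MvPolynomial (Fin n) K) := by
  ext a : 1
  simp [toLin, Fintype.linearCombination_apply, smul_eq_C_mul]

theorem toLin_single (i : Fin n) : toLin (Pi.single i (1 : K)) = X i := by
  simp [toLin_eq_linearCombination]

theorem toLin_injective : Function.Injective (toLin : (Fin n → K) → MvPolynomial (Fin n) K) :=
  toLin_eq_linearCombination (K := K) ▸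
    (linearIndependent_X (R := K) (σ := Fin n)).fintypeLinearCombination_injective

theorem toLin_mem_span_toLin {R : Set (Fin n → K)} {a : Fin n → K}
    (ha : a ∈ Submodule.span K R) : toLin a ∈ Ideal.span (toLin '' R) := by
  rw [toLin_eq_linearCombination]
  exact Submodule.span_le_restrictScalars K _ _
    (Submodule.apply_mem_span_image_of_mem_span _ ha)

/-- `φ` substitutes `xᵢ ↦ π(eᵢ)` for a linear projection `π` of `Kⁿ` with kernel
`span K R`; it fixes every `xᵢ` modulo `Ideal.span (toLin '' R)`, which is therefore its kernel. -/
theorem exists_algHom_ker_eq_span_toLin (R : Set (Fin n → K)) :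
    ∃ φ : MvPolynomial (Fin n) K →ₐ[K] MvPolynomial (Fin n) K,
      RingHom.ker φ = Ideal.span (toLin '' R) ∧
        ∀ a, φ (toLin a) = 0 → a ∈ Submodule.span K R := by
  set W := Submodule.span K R
  obtain ⟨s, hs⟩ := W.mkQ.exists_rightInverse_of_surjective W.range_mkQ
  set π := s ∘ₗ W.mkQ
  have hπW : ∀ w ∈ W, π w = 0 := fun w hw => by
    simp [π, (Submodule.Quotient.mk_eq_zero W).2 hw]
  have hsub : ∀ a, a - π a ∈ W := fun a => by
    rw [← Submodule.Quotient.mk_eq_zero, Submodule.Quotient.mk_sub]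
    have hsa : W.mkQ (s (W.mkQ a)) = W.mkQ a := LinearMap.congr_fun hs (W.mkQ a)
    rw [W.mkQ_apply, W.mkQ_apply] at hsa
    rw [LinearMap.comp_apply, W.mkQ_apply, hsa, sub_self]
  set φ : MvPolynomial (Fin n) K →ₐ[K] MvPolynomial (Fin n) K :=
    aeval fun i => toLin (π (Pi.single i 1))
  have hφ : ∀ a, φ (toLin a) = toLin (π a) := by
    have : φ.toLinearMap ∘ₗ Fintype.linearCombination K X =
        Fintype.linearCombination K X ∘ₗ π :=
      (Pi.basisFun K (Fin n)).ext fun i => by simp [φ, toLin_eq_linearCombination]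
    simpa [toLin_eq_linearCombination] using LinearMap.congr_fun this
  refine ⟨φ, le_antisymm (fun g hg => ?_) ?_, fun a ha => ?_⟩
  · have hmk : (Ideal.Quotient.mkₐ K (Ideal.span (toLin '' R))).comp φ =
        Ideal.Quotient.mkₐ K (Ideal.span (toLin '' R)) := by
      refine algHom_ext fun i => ?_
      simp only [AlgHom.comp_apply, Ideal.Quotient.mkₐ_eq_mk, φ, aeval_X, Ideal.Quotient.eq]
      rw [← toLin_single, toLin_eq_linearCombination, ← map_sub, ← toLin_eq_linearCombination]
      exact toLin_mem_span_toLin (by simpa using W.neg_mem (hsub (Pi.single i 1)))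
    have := congr($hmk g)
    rwa [AlgHom.comp_apply, RingHom.mem_ker.mp hg, map_zero, eq_comm,
      Ideal.Quotient.mkₐ_eq_mk, Ideal.Quotient.eq_zero_iff_mem] at this
  · refine Ideal.span_le.2 ?_
    rintro _ ⟨r, hr, rfl⟩
    rw [SetLike.mem_coe, RingHom.mem_ker, hφ, hπW r (Submodule.subset_span hr),
      toLin_eq_linearCombination, map_zero]
  · rw [hφ, toLin_eq_linearCombination, ← map_zero (Fintype.linearCombination K X),
      ← toLin_eq_linearCombination] at ha
    simpa [toLin_injective ha] using hsub a

theorem isPrime_span_toLin (R : Set (Fin n → K)) : (Ideal.span (toLin '' R)).IsPrime := by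
  obtain ⟨φ, hker, -⟩ := exists_algHom_ker_eq_span_toLin R
  exact hker ▸ RingHom.ker_isPrime φ

theorem mem_span_of_toLin_mem_span_toLin {R : Set (Fin n → K)} {a : Fin n → K}
    (ha : toLin a ∈ Ideal.span (toLin '' R)) : a ∈ Submodule.span K R := by
  obtain ⟨φ, hker, hφ⟩ := exists_algHom_ker_eq_span_toLin R
  exact hφ a (RingHom.mem_ker.mp (hker ▸ ha))

end LinearForms

section Arrangement

variable {K : Type*} [Field K] {n : ℕ} {V : Type*} [AddCommGroup V] [Module K V]
  {α : Fin n → Module.Dual K V} {R : Set (Fin n → K)}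

theorem isRel_iff_mem_ker {a : Fin n → K} :
    IsRel α a ↔ a ∈ LinearMap.ker (Fintype.linearCombination K α) := by
  simp [IsRel, Fintype.linearCombination_apply]

theorem IsRel.of_mem_span (hR : ∀ r ∈ R, IsRel α r) {a : Fin n → K}
    (ha : a ∈ Submodule.span K R) : IsRel α a :=
  isRel_iff_mem_ker.2 (Submodule.span_le.2 (fun r hr => isRel_iff_mem_ker.1 (hR r hr)) ha)

theorem X_notMem_span_toLin (hne : ∀ i, α i ≠ 0) (hR : ∀ r ∈ R, IsRel α r) (i : Fin n) :
    X i ∉ Ideal.span (toLin '' R) := by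
  intro hX
  rw [← toLin_single] at hX
  have := IsRel.of_mem_span hR (mem_span_of_toLin_mem_span_toLin hX)
  exact hne i (by simpa [IsRel, Pi.single_apply] using this)

theorem monomial_notMem_span_toLin (hne : ∀ i, α i ≠ 0) (hR : ∀ r ∈ R, IsRel α r)
    (D : Fin n →₀ ℕ) : monomial D (1 : K) ∉ Ideal.span (toLin '' R) := by
  have := isPrime_span_toLin R
  rw [monomial_eq_C_mul_prod_X_pow, C_1, one_mul, Ideal.IsPrime.prod_mem_iff]
  rintro ⟨i, -, hi⟩
  exact X_notMem_span_toLin hne hR i (this.mem_of_pow_mem _ hi)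

end Arrangement

theorem mem_P_iff_iota_mem_radical_colon_general
    {V : Type*} [AddCommGroup V] [Module K V]
    (α : Fin n → Module.Dual K V) (hne : ∀ i, α i ≠ 0)
    (R : Set (Fin n → K)) (hR : ∀ r ∈ R, IsRel α r)
    (f : MvPolynomial (Fin n) K) :
    f ∈ Ideal.span (toLin '' R) ↔
      iotaP f ∈ ((Ideal.span ((fun r => iotaP (toLin r)) '' R)).radical).colon
        (Ideal.span {∏ i, (X i : MvPolynomial (Fin n) K)}) := by
  rw [Ideal.mem_colon_span_singleton, ← Set.image_image iotaP toLin]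
  constructor
  · intro hf
    obtain ⟨D, hD⟩ := exists_monomial_mul_iotaP_mem_span hf
    obtain ⟨c, hc⟩ := monomial_dvd_prod_X_pow (R := K) D
    refine Ideal.mul_mem_radical_of_pow_mul_mem (∑ i, D i) ?_
    rw [hc, mul_right_comm]
    exact Ideal.mul_mem_right _ _ hD
  · rintro ⟨k, hk⟩
    obtain ⟨D, hD⟩ := exists_monomial_mul_pow_mem_span hk
    have hP := isPrime_span_toLin R
    exact hP.mem_of_pow_mem k
      ((hP.mem_or_mem hD).resolve_left (monomial_notMem_span_toLin hne hR D))

/-- Lemma 3.2, first part: for `ℜ ⊆ F(𝒜)`, with `P(ℜ)` the ideal generated by the elements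
of `ℜ` (as linear polynomials) and `J(ℜ) = (ι(r) : r ∈ ℜ)`, a polynomial `f ∈ S` lies in
`P(ℜ)` if and only if `ι(f) ∈ √(J(ℜ)) : x_[n]`. -/
theorem mem_P_iff_iota_mem_radical_colon
    {V : Type*} [AddCommGroup V] [Module K V] [FiniteDimensional K V]
    (α : Fin n → Module.Dual K V) (hne : ∀ i, α i ≠ 0)
    (hdist : ∀ i j, i ≠ j → LinearMap.ker (α i) ≠ LinearMap.ker (α j))
    (R : Set (Fin n → K)) (hR : ∀ r ∈ R, IsRel α r)
    (f : MvPolynomial (Fin n) K) :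
    f ∈ Ideal.span (toLin '' R) ↔
      iotaP f ∈ ((Ideal.span ((fun r => iotaP (toLin r)) '' R)).radical).colon
        (Ideal.span {∏ i, (X i : MvPolynomial (Fin n) K)}) :=
  mem_P_iff_iota_mem_radical_colon_general α hne R hR f

end
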